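/- arXiv:nlin/0505005 — 3 statements merged into one kernel-verified Lean document; each statement's English description precedes it below -/
import Mathlib

section
/- Let R = ℂ[[x]] and let D = R[∂] be the ring of differential operators. If two monic differential operators Q (of order m ≥ 1) and P (of order n ≥ 1) commute, then there exists a nonzero polynomial F ∈ ℂ[z,w] such that F(Q,P) = 0 in D. -/
/-!
Let `A ≠ 0` commute with `Q`, monic of order `m ≥ 1`, and let `a ∂^d` be the leading term of `A`.
In `[Q, A] = 0` the coefficient of `∂^(d+m-1)` is `m a'`, so the leading coefficient `a` is a
nonzero constant; in particular its constant term is nonzero. Hence an operator of order `≤ N`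
commuting with `Q` vanishes once all its coefficients have zero constant term. The `(T+1)²`
operators `Q^i P^j` with `i, j ≤ T = m + n` commute with `Q` and have order `≤ T²`, so the
`ℂ`-linear map recording the constant terms of their `T² + 1` coefficients has a nonzero kernel
on their span: some nonzero combination `F(Q, P)` vanishes.
-/

namespace DiffOp

open Finset Polynomial

variable {R D : Type*} [CommRing R] [Ring D] (ι : R →+* D) (δ : D)

def ordLT (N : ℕ) : AddSubgroup D :=
  AddSubgroup.closure {A | ∃ (a : R) (i : ℕ), i < N ∧ ι a * δ ^ i = A}

def IsMonicOfOrder (k : ℕ) (A : D) : Prop :=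
  A - δ ^ k ∈ ordLT ι δ k

variable {ι δ}

theorem monomial_mem_ordLT {N i : ℕ} (a : R) (hi : i < N) : ι a * δ ^ i ∈ ordLT ι δ N :=
  AddSubgroup.subset_closure ⟨a, i, hi, rfl⟩

theorem ordLT_mono {N M : ℕ} (h : N ≤ M) : ordLT ι δ N ≤ ordLT ι δ M :=
  AddSubgroup.closure_mono fun _ ⟨a, i, hi, hA⟩ => ⟨a, i, hi.trans_le h, hA⟩

theorem ordLT_le_comap {N M : ℕ} {f : D →+ D}
    (h : ∀ (a : R) (i : ℕ), i < N → f (ι a * δ ^ i) ∈ ordLT ι δ M) :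
    ordLT ι δ N ≤ (ordLT ι δ M).comap f :=
  (AddSubgroup.closure_le _).2 fun _ ⟨a, i, hi, hA⟩ => hA ▸ h a i hi

theorem iota_mul_mem_ordLT {N : ℕ} (c : R) {A : D} (hA : A ∈ ordLT ι δ N) :
    ι c * A ∈ ordLT ι δ N :=
  ordLT_le_comap (f := AddMonoidHom.mulLeft (ι c)) (fun a i hi => by
    simpa [← mul_assoc, ← map_mul] using monomial_mem_ordLT (c * a) hi) hA

theorem mul_delta_pow_mem_ordLT {N : ℕ} {A : D} (hA : A ∈ ordLT ι δ N) (k : ℕ) :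
    A * δ ^ k ∈ ordLT ι δ (N + k) :=
  ordLT_le_comap (f := AddMonoidHom.mulRight (δ ^ k)) (fun a i hi => by
    simpa [mul_assoc, ← pow_add] using monomial_mem_ordLT a (by omega : i + k < N + k)) hA

theorem exists_eval₂_of_mem_ordLT {N : ℕ} {A : D} (hA : A ∈ ordLT ι δ N) :
    ∃ p : R[X], p.degree < N ∧ p.eval₂ ι δ = A := by
  suffices ordLT ι δ N ≤ (degreeLT R N).toAddSubgroup.map (eval₂AddMonoidHom ι δ) by
    obtain ⟨p, hp, rfl⟩ := this hA
    exact ⟨p, mem_degreeLT.1 hp, rfl⟩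
  refine (AddSubgroup.closure_le _).2 fun _ ⟨a, i, hi, hA⟩ => ⟨monomial i a, ?_, ?_⟩
  · exact mem_degreeLT.2 ((degree_monomial_le i a).trans_lt (by exact_mod_cast hi))
  · simpa using hA

theorem eval₂_sub_monomial_leadingCoeff_mem_ordLT (p : R[X]) :
    p.eval₂ ι δ - ι p.leadingCoeff * δ ^ p.natDegree ∈ ordLT ι δ p.natDegree := by
  rw [eval₂_eq_sum_range, sum_range_succ, coeff_natDegree, add_sub_cancel_right]
  exact sum_mem fun i hi => monomial_mem_ordLT _ (mem_range.1 hi)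

theorem isMonicOfOrder_add_sum (k : ℕ) (u : ℕ → R) :
    IsMonicOfOrder ι δ k (δ ^ k + ∑ i ∈ range k, ι (u i) * δ ^ i) := by
  rw [IsMonicOfOrder, add_sub_cancel_left]
  exact sum_mem fun i hi => monomial_mem_ordLT _ (mem_range.1 hi)

theorem IsMonicOfOrder.mem_ordLT {k : ℕ} {A : D} (hA : IsMonicOfOrder ι δ k A) :
    A ∈ ordLT ι δ (k + 1) := by
  simpa using add_mem (ordLT_mono k.le_succ hA)
    (monomial_mem_ordLT (ι := ι) (δ := δ) 1 k.lt_succ_self)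

section Leibniz

variable {der : R → R} (hrel : ∀ a, δ * ι a = ι a * δ + ι (der a))
include hrel

theorem delta_mul_mem_ordLT {N : ℕ} {A : D} (hA : A ∈ ordLT ι δ N) :
    δ * A ∈ ordLT ι δ (N + 1) :=
  ordLT_le_comap (f := AddMonoidHom.mulLeft δ) (fun a i hi => by
    show δ * (ι a * δ ^ i) ∈ _
    rw [← mul_assoc, hrel, add_mul, mul_assoc, ← pow_succ']
    exact add_mem (monomial_mem_ordLT a (by omega)) (monomial_mem_ordLT _ (by omega))) hA

theorem delta_pow_mul_iota_sub_mem_ordLT (k : ℕ) (b : R) :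
    δ ^ k * ι b - ι b * δ ^ k ∈ ordLT ι δ k := by
  induction k with
  | zero => simp
  | succ k ih =>
    have key : δ ^ (k + 1) * ι b - ι b * δ ^ (k + 1) =
        δ * (δ ^ k * ι b - ι b * δ ^ k) + (δ * ι b - ι b * δ) * δ ^ k := by
      rw [pow_succ']; noncomm_ring
    rw [key, hrel, add_sub_cancel_left]
    exact add_mem (delta_mul_mem_ordLT hrel ih) (monomial_mem_ordLT _ (by omega))

theorem delta_pow_succ_mul_iota_sub_mem_ordLT (k : ℕ) (b : R) :
    δ ^ (k + 1) * ι b - ι b * δ ^ (k + 1) - ι ((k + 1) • der b) * δ ^ k ∈ ordLT ι δ k := by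
  have hrel' : ∀ a, δ * ι a - ι a * δ - ι (der a) = 0 := fun a => by rw [hrel]; abel
  induction k with
  | zero => simp [hrel']
  | succ k ih =>
    set c := (k + 1) • der b
    have hsum : ι ((k + 1 + 1) • der b) = ι (der b) + ι c := by rw [succ_nsmul', map_add]
    have key : δ ^ (k + 1 + 1) * ι b - ι b * δ ^ (k + 1 + 1) -
          ι ((k + 1 + 1) • der b) * δ ^ (k + 1) =
        δ * (δ ^ (k + 1) * ι b - ι b * δ ^ (k + 1) - ι c * δ ^ k) +
          (δ * ι b - ι b * δ - ι (der b)) * δ ^ (k + 1) +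
          (δ * ι c - ι c * δ - ι (der c)) * δ ^ k + ι (der c) * δ ^ k := by
      rw [hsum, pow_succ' δ (k + 1), pow_succ' δ k]; noncomm_ring
    rw [key, hrel', hrel', zero_mul, zero_mul, add_zero, add_zero]
    exact add_mem (delta_mul_mem_ordLT hrel ih) (monomial_mem_ordLT _ (by omega))

theorem delta_pow_mul_mem_ordLT {N : ℕ} (k : ℕ) {A : D} (hA : A ∈ ordLT ι δ N) :
    δ ^ k * A ∈ ordLT ι δ (k + N) :=
  ordLT_le_comap (f := AddMonoidHom.mulLeft (δ ^ k)) (fun a i hi => by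
    have h : δ ^ k * (ι a * δ ^ i) =
        ι a * δ ^ (k + i) + (δ ^ k * ι a - ι a * δ ^ k) * δ ^ i := by
      rw [pow_add]; noncomm_ring
    rw [AddMonoidHom.coe_mulLeft, h]
    exact add_mem (monomial_mem_ordLT a (by omega)) (ordLT_mono (by omega)
      (mul_delta_pow_mem_ordLT (delta_pow_mul_iota_sub_mem_ordLT hrel k a) i))) hA

theorem mul_mem_ordLT {N M : ℕ} {A B : D} (hA : A ∈ ordLT ι δ N) (hB : B ∈ ordLT ι δ M) :
    A * B ∈ ordLT ι δ (N + M) :=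
  ordLT_le_comap (f := AddMonoidHom.mulRight B) (fun a i hi => by
    show ι a * δ ^ i * B ∈ _
    rw [mul_assoc]
    exact iota_mul_mem_ordLT a
      (ordLT_mono (by omega) (delta_pow_mul_mem_ordLT hrel i hB))) hA

-- If `N = 0` or `M = 0` the truncated subtraction is harmless: then `A = 0` or `B = 0`.
theorem commutator_mem_ordLT {N M : ℕ} {A B : D} (hA : A ∈ ordLT ι δ N)
    (hB : B ∈ ordLT ι δ M) : A * B - B * A ∈ ordLT ι δ (N + M - 2) := by
  refine ordLT_le_comap (f := AddMonoidHom.mulRight B - AddMonoidHom.mulLeft B)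
    (fun a i hi => ?_) hA
  refine ordLT_le_comap
    (f := AddMonoidHom.mulLeft (ι a * δ ^ i) - AddMonoidHom.mulRight (ι a * δ ^ i))
    (fun b j hj => ?_) hB
  show ι a * δ ^ i * (ι b * δ ^ j) - ι b * δ ^ j * (ι a * δ ^ i) ∈ _
  have hab : ι b * ι a = ι a * ι b := by rw [← map_mul, ← map_mul, mul_comm]
  have hij : δ ^ j * δ ^ i = δ ^ i * δ ^ j := pow_mul_comm δ j i
  have h : ι a * δ ^ i * (ι b * δ ^ j) - ι b * δ ^ j * (ι a * δ ^ i) =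
      ι a * (δ ^ i * ι b - ι b * δ ^ i) * δ ^ j - ι b * (δ ^ j * ι a - ι a * δ ^ j) * δ ^ i +
        (ι a * ι b * (δ ^ i * δ ^ j) - ι b * ι a * (δ ^ j * δ ^ i)) := by
    noncomm_ring
  rw [h, hab, hij, sub_self, add_zero]
  exact sub_mem
    (ordLT_mono (by omega) (mul_delta_pow_mem_ordLT
      (iota_mul_mem_ordLT a (delta_pow_mul_iota_sub_mem_ordLT hrel i b)) j))
    (ordLT_mono (by omega) (mul_delta_pow_mem_ordLT
      (iota_mul_mem_ordLT b (delta_pow_mul_iota_sub_mem_ordLT hrel j a)) i))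

theorem IsMonicOfOrder.mul {k l : ℕ} {A B : D} (hA : IsMonicOfOrder ι δ k A)
    (hB : IsMonicOfOrder ι δ l B) : IsMonicOfOrder ι δ (k + l) (A * B) := by
  have h : A * B - δ ^ (k + l) =
      δ ^ k * (B - δ ^ l) + (A - δ ^ k) * δ ^ l + (A - δ ^ k) * (B - δ ^ l) := by
    rw [pow_add]; noncomm_ring
  rw [IsMonicOfOrder, h]
  exact add_mem (add_mem (delta_pow_mul_mem_ordLT hrel k hB)
    (by simpa [add_comm] using mul_delta_pow_mem_ordLT hA l))
    (ordLT_mono (by omega) (mul_mem_ordLT hrel hA hB))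

theorem IsMonicOfOrder.pow {k : ℕ} {A : D} (hA : IsMonicOfOrder ι δ k A) (j : ℕ) :
    IsMonicOfOrder ι δ (k * j) (A ^ j) := by
  induction j with
  | zero => simp [IsMonicOfOrder]
  | succ j ih => simpa [pow_succ, Nat.mul_succ] using ih.mul hrel hA

theorem commute_iota_of_der_eq_zero (hsurj : Function.Surjective (eval₂ ι δ)) {c : R}
    (hc : der c = 0) (A : D) : Commute (ι c) A := by
  have hδ : Commute (ι c) δ := by
    have h := hrel c
    rw [hc, map_zero, add_zero] at h
    exact h.symm
  obtain ⟨p, rfl⟩ := hsurj A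
  induction p using Polynomial.induction_on' with
  | add p q hp hq => simpa only [eval₂_add] using hp.add_right hq
  | monomial n a =>
    simpa only [eval₂_monomial] using ((Commute.all c a).map ι).mul_right (hδ.pow_right n)

end Leibniz

section Injective

variable (hinj : Function.Injective (eval₂ ι δ))
include hinj

theorem eq_zero_of_monomial_mem_ordLT {i : ℕ} {a : R} (h : ι a * δ ^ i ∈ ordLT ι δ i) :
    a = 0 := by
  obtain ⟨q, hq, hqa⟩ := exists_eval₂_of_mem_ordLT h
  rw [← eval₂_monomial] at hqa
  obtain rfl := hinj hqa
  simpa using coeff_eq_zero_of_degree_lt hq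

/- In `[W, A] = 0` every term has order `< d + k` except `(k + 1) • der a * δ ^ (d + k)`, which
comes from `[δ ^ (k + 1), ι a] * δ ^ d`. -/
theorem der_eq_zero_of_commute [IsAddTorsionFree R] {der : R → R}
    (hrel : ∀ a, δ * ι a = ι a * δ + ι (der a)) {k d : ℕ} {a : R} {A W : D}
    (hA : A - ι a * δ ^ d ∈ ordLT ι δ d) (hW : IsMonicOfOrder ι δ (k + 1) W)
    (hcomm : Commute A W) : der a = 0 := by
  obtain ⟨A₀, hA₀, rfl⟩ : ∃ A₀ ∈ ordLT ι δ d, A = ι a * δ ^ d + A₀ := ⟨_, hA, by abel⟩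
  obtain ⟨U, hU, rfl⟩ : ∃ U ∈ ordLT ι δ (k + 1), W = δ ^ (k + 1) + U := ⟨_, hW, by abel⟩
  have hA : ι a * δ ^ d + A₀ ∈ ordLT ι δ (d + 1) :=
    add_mem (monomial_mem_ordLT a d.lt_succ_self) (ordLT_mono d.le_succ hA₀)
  have hδ : δ ^ (k + 1) ∈ ordLT ι δ (k + 2) := by
    simpa using monomial_mem_ordLT (ι := ι) (δ := δ) 1 (by omega : k + 1 < k + 2)
  set c := (k + 1) • der a
  set A := ι a * δ ^ d + A₀
  have key : ι c * (δ ^ k * δ ^ d) = ((δ ^ (k + 1) + U) * A - A * (δ ^ (k + 1) + U)) -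
      ((δ ^ (k + 1) * ι a - ι a * δ ^ (k + 1) - ι c * δ ^ k) * δ ^ d +
        (δ ^ (k + 1) * A₀ - A₀ * δ ^ (k + 1)) + (U * A - A * U)) +
      ι a * (δ ^ d * δ ^ (k + 1) - δ ^ (k + 1) * δ ^ d) := by
    simp only [A]; noncomm_ring
  rw [pow_mul_comm δ d (k + 1), sub_self, mul_zero, add_zero, sub_eq_zero.2 hcomm.eq.symm,
    zero_sub, ← pow_add, add_comm] at key
  have hmem : ι c * δ ^ (d + k) ∈ ordLT ι δ (d + k) := by
    rw [key]
    refine neg_mem (add_mem (add_mem ?_ ?_) ?_)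
    · exact ordLT_mono (add_comm k d).le
        (mul_delta_pow_mem_ordLT (delta_pow_succ_mul_iota_sub_mem_ordLT hrel k a) d)
    · exact ordLT_mono (by omega) (commutator_mem_ordLT hrel hδ hA₀)
    · exact ordLT_mono (by omega) (commutator_mem_ordLT hrel hU hA)
  exact (smul_eq_zero.1 (eq_zero_of_monomial_mem_ordLT hinj hmem)).resolve_left k.succ_ne_zero

end Injective

section Symbol

variable (hbij : Function.Bijective (eval₂ ι δ))

noncomputable def symbol : D ≃+ R[X] :=
  (AddEquiv.ofBijective (eval₂AddMonoidHom ι δ) hbij).symm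

@[simp]
theorem eval₂_symbol (A : D) : (symbol hbij A).eval₂ ι δ = A :=
  (AddEquiv.ofBijective (eval₂AddMonoidHom ι δ) hbij).apply_symm_apply A

@[simp]
theorem symbol_eval₂ (p : R[X]) : symbol hbij (p.eval₂ ι δ) = p :=
  (AddEquiv.ofBijective (eval₂AddMonoidHom ι δ) hbij).symm_apply_apply p

theorem symbol_iota_mul (c : R) (A : D) : symbol hbij (ι c * A) = C c * symbol hbij A := by
  conv_lhs => rw [← eval₂_symbol hbij A, ← eval₂_smul, ← C_mul', symbol_eval₂]

theorem degree_symbol_lt {N : ℕ} {A : D} (hA : A ∈ ordLT ι δ N) :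
    (symbol hbij A).degree < N := by
  obtain ⟨p, hp, rfl⟩ := exists_eval₂_of_mem_ordLT hA
  rwa [symbol_eval₂]

end Symbol

theorem bijective_eval₂_of_unique_expansion
    (hspan : ∀ A : D, ∃ (N : ℕ) (a : ℕ → R), A = ∑ i ∈ range (N + 1), ι (a i) * δ ^ i)
    (hind : ∀ (N : ℕ) (a : ℕ → R),
      (∑ i ∈ range (N + 1), ι (a i) * δ ^ i) = 0 → ∀ i ≤ N, a i = 0) :
    Function.Bijective (eval₂ ι δ) := by
  refine ⟨(injective_iff_map_eq_zero (eval₂AddMonoidHom ι δ)).2 fun p hp => ?_, fun A => ?_⟩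
  · refine leadingCoeff_eq_zero.1 (hind p.natDegree p.coeff ?_ _ le_rfl)
    rwa [← eval₂_eq_sum_range]
  · obtain ⟨N, a, rfl⟩ := hspan A
    exact ⟨∑ i ∈ range (N + 1), monomial i (a i), by simp [eval₂_finsetSum]⟩

section PowerSeries

open PowerSeries

variable {K : Type*} [Field K] [CharZero K] {ι : K⟦X⟧ →+* D} {δ : D}
  (hrel : ∀ a, δ * ι a = ι a * δ + ι (d⁄dX K a)) (hbij : Function.Bijective (eval₂ ι δ))
include hrel hbij

theorem eq_zero_of_commute_of_constantCoeff_eq_zero {k N : ℕ} {A W : D}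
    (hW : IsMonicOfOrder ι δ (k + 1) W) (hcomm : Commute A W) (hA : A ∈ ordLT ι δ (N + 1))
    (h0 : ∀ j ≤ N, constantCoeff ((symbol hbij A).coeff j) = 0) : A = 0 := by
  have : IsAddTorsionFree K⟦X⟧ := .of_module_rat _
  set p := symbol hbij A
  have hderiv : d⁄dX K p.leadingCoeff = 0 := by
    refine der_eq_zero_of_commute hbij.injective hrel (d := p.natDegree) ?_ hW hcomm
    simpa only [p, eval₂_symbol] using
      eval₂_sub_monomial_leadingCoeff_mem_ordLT (ι := ι) (δ := δ) p
  by_contra hne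
  have hp : p ≠ 0 := (symbol hbij).map_ne_zero_iff.2 hne
  have hdeg : p.natDegree ≤ N := Nat.lt_succ_iff.1
    ((natDegree_lt_iff_degree_lt hp).2 (by exact_mod_cast degree_symbol_lt hbij hA))
  have hlead : p.leadingCoeff = 0 :=
    derivative.ext (by simpa using hderiv) (by simpa using h0 _ hdeg)
  exact hp (leadingCoeff_eq_zero.1 hlead)

theorem exists_ne_zero_sum_iota_mul_eq_zero {k N : ℕ} {W : D}
    (hW : IsMonicOfOrder ι δ (k + 1) W) {ι' : Type*} [Fintype ι'] (M : ι' → D)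
    (hcomm : ∀ e, Commute (M e) W) (hM : ∀ e, M e ∈ ordLT ι δ (N + 1))
    (hcard : N + 1 < Fintype.card ι') :
    ∃ g : ι' → K, g ≠ 0 ∧ ∑ e, ι (PowerSeries.C (g e)) * M e = 0 := by
  set ψ : ι' → Fin (N + 1) → K := fun e j => constantCoeff ((symbol hbij (M e)).coeff j)
  have hdep : ¬ LinearIndependent K ψ := fun hli => by
    have := hli.fintype_card_le_finrank
    simp only [Module.finrank_fin_fun] at this
    omega
  obtain ⟨g, hg, e₀, he₀⟩ := Fintype.not_linearIndependent_iff.1 hdep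
  refine ⟨g, Function.ne_iff.2 ⟨e₀, he₀⟩, eq_zero_of_commute_of_constantCoeff_eq_zero hrel hbij
    hW (Commute.sum_left _ _ _ fun e _ => ?_) (sum_mem fun e _ => iota_mul_mem_ordLT _ (hM e))
    fun j hj => ?_⟩
  · exact (commute_iota_of_der_eq_zero hrel hbij.surjective derivative_C W).mul_left (hcomm e)
  · have := congrFun hg ⟨j, Nat.lt_succ_iff.2 hj⟩
    simpa [ψ, symbol_iota_mul, finsetSum_coeff] using this

end PowerSeries

end DiffOp

theorem MvPolynomial.exists_ne_zero_sum_support_coeff_eq {σ ι' K M : Type*} [Fintype ι']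
    [CommSemiring K] [AddCommMonoid M] {E : ι' → σ →₀ ℕ} (hE : Function.Injective E)
    {g : ι' → K} (hg : g ≠ 0) (φ : (σ →₀ ℕ) → K →+ M) :
    ∃ F : MvPolynomial σ K, F ≠ 0 ∧ ∑ s ∈ F.support, φ s (F.coeff s) = ∑ x, φ (E x) (g x) := by
  classical
  obtain ⟨x, hx⟩ := Function.ne_iff.1 hg
  refine ⟨∑ x, monomial (E x) (g x), fun hF => hx ?_, ?_⟩
  · have := congrArg (coeff (E x)) hF
    rwa [coeff_sum, Finset.sum_eq_single x
      (fun y _ hy => by rw [coeff_monomial, if_neg (hE.ne hy)]) (by simp),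
      coeff_monomial, if_pos rfl, coeff_zero] at this
  · rw [← sum_def, AddMonoidAlgebra.coeff_sum,
      ← Finsupp.sum_finsetSum_index (fun s => map_zero _) (fun s => map_add _)]
    exact Finset.sum_congr rfl fun x _ => sum_monomial_eq (map_zero _)

open Finset PowerSeries DiffOp

theorem burchnall_chaundy_general
    {D : Type*} [Ring D]
    (ι : PowerSeries ℂ →+* D) (δ : D)
    (hrel : ∀ a : PowerSeries ℂ, δ * ι a = ι a * δ + ι (PowerSeries.derivative (R := ℂ) a))
    (hspan : ∀ A : D, ∃ (N : ℕ) (a : ℕ → PowerSeries ℂ),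
      A = ∑ i ∈ range (N + 1), ι (a i) * δ ^ i)
    (hind : ∀ (N : ℕ) (a : ℕ → PowerSeries ℂ),
      (∑ i ∈ range (N + 1), ι (a i) * δ ^ i) = 0 → ∀ i ≤ N, a i = 0)
    (m n : ℕ) (hm : 1 ≤ m)
    (u v : ℕ → PowerSeries ℂ)
    (Q P : D)
    (hQ : Q = δ ^ m + ∑ i ∈ range m, ι (u i) * δ ^ i)
    (hP : P = δ ^ n + ∑ i ∈ range n, ι (v i) * δ ^ i)
    (hcomm : P * Q = Q * P) :
    ∃ F : MvPolynomial (Fin 2) ℂ, F ≠ 0 ∧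
      ∑ mono ∈ F.support,
        ι (PowerSeries.C (R := ℂ) (MvPolynomial.coeff mono F)) * Q ^ mono 0 * P ^ mono 1 = 0 := by
  have hbij := bijective_eval₂_of_unique_expansion hspan hind
  have hQm : IsMonicOfOrder ι δ m Q := hQ ▸ isMonicOfOrder_add_sum m u
  have hPm : IsMonicOfOrder ι δ n P := hP ▸ isMonicOfOrder_add_sum n v
  obtain ⟨k, rfl⟩ : ∃ k, m = k + 1 := ⟨m - 1, by omega⟩
  obtain ⟨T, hT⟩ : ∃ T, T = k + 1 + n := ⟨_, rfl⟩
  have hord : ∀ i j, i < T + 1 → j < T + 1 → (k + 1) * i + n * j + 1 ≤ T * T + 1 :=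
    fun i j hi hj => by subst hT; nlinarith
  obtain ⟨g, hg, hrelation⟩ := exists_ne_zero_sum_iota_mul_eq_zero hrel hbij hQm (N := T * T)
    (fun e : Fin 2 → Fin (T + 1) => Q ^ (e 0 : ℕ) * P ^ (e 1 : ℕ))
    (fun e => ((Commute.refl Q).pow_left _).mul_left ((show Commute P Q from hcomm).pow_left _))
    (fun e => ordLT_mono (hord _ _ (e 0).is_lt (e 1).is_lt)
      ((hQm.pow hrel _).mul hrel (hPm.pow hrel _)).mem_ordLT)
    (by simp only [Fintype.card_fun, Fintype.card_fin]; subst hT; nlinarith)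
  have hE : Function.Injective fun e : Fin 2 → Fin (T + 1) =>
      Finsupp.equivFunOnFinite.symm fun i => (e i : ℕ) :=
    Finsupp.equivFunOnFinite.symm.injective.comp
      fun e e' h => funext fun i => Fin.ext (congrFun h i)
  obtain ⟨F, hF, hsum⟩ := MvPolynomial.exists_ne_zero_sum_support_coeff_eq hE hg fun s =>
    (AddMonoidHom.mulRight (Q ^ s 0 * P ^ s 1)).comp (ι.toAddMonoidHom.comp C.toAddMonoidHom)
  refine ⟨F, hF, ?_⟩
  simpa [mul_assoc] using hsum.trans hrelation

/-- **Burchnall–Chaundy theorem.**  Let `R = ℂ[[x]]` and let `D = R[∂]` be the ring of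
differential operators over `R` (axiomatized as a ring containing `R` via `ι`, with an
element `δ` satisfying `δ * a = a * δ + a'`, every element being uniquely a finite sum
`∑ ι (a i) * δ ^ i`).  If `Q` (monic of order `m ≥ 1`) and `P` (monic of order `n ≥ 1`)
commute, then there is a nonzero polynomial `F ∈ ℂ[z,w]` with `F(Q,P) = 0` in `D`. -/
theorem burchnall_chaundy
    {D : Type*} [Ring D]
    (ι : PowerSeries ℂ →+* D) (δ : D)
    (hrel : ∀ a : PowerSeries ℂ, δ * ι a = ι a * δ + ι (PowerSeries.derivative (R := ℂ) a))
    (hspan : ∀ A : D, ∃ (N : ℕ) (a : ℕ → PowerSeries ℂ),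
      A = ∑ i ∈ range (N + 1), ι (a i) * δ ^ i)
    (hind : ∀ (N : ℕ) (a : ℕ → PowerSeries ℂ),
      (∑ i ∈ range (N + 1), ι (a i) * δ ^ i) = 0 → ∀ i ≤ N, a i = 0)
    (m n : ℕ) (hm : 1 ≤ m) (hn : 1 ≤ n)
    (u v : ℕ → PowerSeries ℂ)
    (Q P : D)
    (hQ : Q = δ ^ m + ∑ i ∈ range m, ι (u i) * δ ^ i)
    (hP : P = δ ^ n + ∑ i ∈ range n, ι (v i) * δ ^ i)
    (hcomm : P * Q = Q * P) :
    ∃ F : MvPolynomial (Fin 2) ℂ, F ≠ 0 ∧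
      ∑ mono ∈ F.support,
        ι (PowerSeries.C (R := ℂ) (MvPolynomial.coeff mono F)) * Q ^ mono 0 * P ^ mono 1 = 0 :=
  burchnall_chaundy_general ι δ hrel hspan hind m n hm u v Q P hQ hP hcomm
end

section
/- Let Ψ(z) be an r×r matrix of holomorphic functions near z₀ with det Ψ having a simple zero at z₀. Then Ψ^{−1}(z) = S/(z−z₀) + O(1) near z₀ where the matrix S = Res_{z₀} Ψ^{−1} has rank exactly 1. -/
/-!
Write `det Ψ z = (z - z₀) * q z` with `q` analytic and `q z₀ = (det Ψ)'(z₀) ≠ 0`. Then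
`Ψ⁻¹ = adj Ψ / det Ψ = (z - z₀)⁻¹ • m z` with `m = q⁻¹ • adj Ψ` analytic, so subtracting
`(z - z₀)⁻¹ • m z₀` leaves the difference quotient of `m`, which converges. The residue
`S = m z₀` is a nonzero multiple of `adj Ψ(z₀)`. Since `adj A * A = 0`, and a nonzero cofactor
of `A` makes some rank-one row update of `A` invertible, `adj A` has rank at most one when
`det A = 0`. Finally `adj Ψ(z₀) ≠ 0`: otherwise differentiating `adj Ψ * Ψ = det Ψ • 1` at `z₀`
would exhibit a left inverse of `Ψ z₀`.
-/

open Filter Topology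

theorem AnalyticAt.dslope {𝕜 E : Type*} [NontriviallyNormedField 𝕜] [NormedAddCommGroup E]
    [NormedSpace 𝕜 E] {f : 𝕜 → E} {a : 𝕜} (hf : AnalyticAt 𝕜 f a) :
    AnalyticAt 𝕜 (dslope f a) a :=
  let ⟨_, hp⟩ := hf
  ⟨_, hp.has_fpower_series_dslope_fslope⟩

namespace Matrix

section Rank

variable {m n K : Type*} [Fintype n] [Field K]

theorem rank_add_le [Finite m] (A B : Matrix m n K) : (A + B).rank ≤ A.rank + B.rank := by
  have := Fintype.ofFinite m
  rw [rank, mulVecLin_add]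
  exact (Submodule.finrank_mono (LinearMap.range_add_le _ _)).trans
    (Submodule.finrank_add_le_finrank_add_finrank _ _)

theorem rank_eq_zero_iff [DecidableEq n] {A : Matrix m n K} : A.rank = 0 ↔ A = 0 := by
  rw [rank, Submodule.finrank_eq_zero, LinearMap.range_eq_bot, ← toLin'_apply',
    LinearEquiv.map_eq_zero_iff]

theorem rank_updateRow_le [Finite m] [DecidableEq m] (A : Matrix m n K) (j : m) (v : n → K) :
    (A.updateRow j v).rank ≤ A.rank + 1 := by
  have hsupp : Function.support (A.updateRow j v - A).row ⊆ ({j} : Finset m) := by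
    intro k hk
    by_contra hkj
    exact hk (funext fun l => by simp [row, updateRow_ne (Finset.mem_singleton.not.mp hkj)])
  calc (A.updateRow j v).rank = (A + (A.updateRow j v - A)).rank := by rw [add_sub_cancel]
    _ ≤ A.rank + (A.updateRow j v - A).rank := rank_add_le _ _
    _ ≤ A.rank + 1 := by
      gcongr
      simpa using rank_le_card_of_support_subset _ _ hsupp

variable [DecidableEq n]

theorem card_le_rank_add_one_of_adjugate_ne_zero {A : Matrix n n K} (hA : A.adjugate ≠ 0) :
    Fintype.card n ≤ A.rank + 1 := by
  obtain ⟨i, j, hij⟩ : ∃ i j, A.adjugate i j ≠ 0 := by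
    by_contra! h
    exact hA (ext h)
  rw [adjugate_apply] at hij
  calc Fintype.card n = (A.updateRow j (Pi.single i 1)).rank := (rank_of_det_ne_zero hij).symm
    _ ≤ A.rank + 1 := rank_updateRow_le _ _ _

theorem rank_adjugate_le_one {A : Matrix n n K} (hA : A.det = 0) : A.adjugate.rank ≤ 1 := by
  by_cases h0 : A.adjugate = 0
  · simp [h0]
  have hmul : A.adjugate * A = 0 := by rw [adjugate_mul, hA, zero_smul]
  have := rank_add_rank_le_card_of_mul_eq_zero hmul
  have := card_le_rank_add_one_of_adjugate_ne_zero h0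
  omega

theorem rank_adjugate_eq_one {A : Matrix n n K} (hA : A.det = 0) (h0 : A.adjugate ≠ 0) :
    A.adjugate.rank = 1 := by
  have := rank_eq_zero_iff.not.mpr h0
  have := rank_adjugate_le_one hA
  omega

end Rank

section Analytic

variable {𝕜 E n : Type*} [NontriviallyNormedField 𝕜] [NormedAddCommGroup E] [NormedSpace 𝕜 E]
  [Fintype n] [DecidableEq n] {A : E → Matrix n n 𝕜} {x : E}

theorem analyticAt_det (hA : ∀ i j, AnalyticAt 𝕜 (fun z => A z i j) x) :
    AnalyticAt 𝕜 (fun z => (A z).det) x := by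
  simp only [det_apply, Units.smul_def, zsmul_eq_mul]
  exact Finset.analyticAt_fun_sum _ fun σ _ =>
    analyticAt_const.mul (Finset.analyticAt_fun_prod _ fun i _ => hA _ _)

theorem analyticAt_adjugate_apply (hA : ∀ i j, AnalyticAt 𝕜 (fun z => A z i j) x) (i j : n) :
    AnalyticAt 𝕜 (fun z => (A z).adjugate i j) x := by
  simp only [adjugate_apply]
  refine analyticAt_det fun k l => ?_
  by_cases hk : k = j
  · simp [updateRow_apply, hk, analyticAt_const]
  · simpa [updateRow_apply, hk] using hA k l

theorem adjugate_ne_zero_of_deriv_det_ne_zero {Ψ : 𝕜 → Matrix n n 𝕜} {z₀ : 𝕜}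
    (hΨ : ∀ i j, AnalyticAt 𝕜 (fun z => Ψ z i j) z₀) (hdet0 : (Ψ z₀).det = 0)
    (hdet' : deriv (fun z => (Ψ z).det) z₀ ≠ 0) : (Ψ z₀).adjugate ≠ 0 := by
  intro hadj
  set d' := deriv (fun z => (Ψ z).det) z₀
  set D : Matrix n n 𝕜 := of fun i k => deriv (fun z => (Ψ z).adjugate i k) z₀
  have hD : D * Ψ z₀ = d' • 1 := by
    ext i j
    have hprod : HasDerivAt (fun z => ((Ψ z).adjugate * Ψ z) i j) ((D * Ψ z₀) i j) z₀ := by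
      simp only [mul_apply]
      exact (HasDerivAt.fun_sum fun k _ =>
        (analyticAt_adjugate_apply hΨ i k).differentiableAt.hasDerivAt.mul
          (hΨ k j).differentiableAt.hasDerivAt).congr_deriv (by simp [hadj, D])
    have hdet :
        HasDerivAt (fun z => ((Ψ z).adjugate * Ψ z) i j) ((d' • 1 : Matrix n n 𝕜) i j) z₀ := by
      simp only [adjugate_mul, smul_apply, smul_eq_mul]
      exact (analyticAt_det hΨ).differentiableAt.hasDerivAt.mul_const _
    exact hprod.unique hdet
  have hinv : (d'⁻¹ • D) * Ψ z₀ = 1 := by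
    rw [smul_mul, hD, smul_smul, inv_mul_cancel₀ hdet', one_smul]
  exact (isUnit_det_of_left_inverse hinv).ne_zero hdet0

theorem tendsto_inv_sub_smul_adjugate {Ψ : 𝕜 → Matrix n n 𝕜} {z₀ : 𝕜}
    (hΨ : ∀ i j, AnalyticAt 𝕜 (fun z => Ψ z i j) z₀) (hdet0 : (Ψ z₀).det = 0)
    (hdet' : deriv (fun z => (Ψ z).det) z₀ ≠ 0) :
    ∃ L : Matrix n n 𝕜, Tendsto
      (fun z => (Ψ z)⁻¹ - (z - z₀)⁻¹ • (deriv (fun z => (Ψ z).det) z₀)⁻¹ • (Ψ z₀).adjugate)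
      (𝓝[≠] z₀) (𝓝 L) := by
  set d := fun z => (Ψ z).det
  set q := dslope d z₀
  have hq0 : q z₀ = deriv d z₀ := dslope_same d z₀
  have hd : ∀ z, d z = (z - z₀) * q z := fun z => by
    simpa [hdet0, d] using (sub_smul_dslope d z₀ z).symm
  set m : n → n → 𝕜 → 𝕜 := fun i j z => (q z)⁻¹ * (Ψ z).adjugate i j
  have hm : ∀ i j, AnalyticAt 𝕜 (m i j) z₀ := fun i j =>
    ((analyticAt_det hΨ).dslope.inv (hq0.trans_ne hdet')).mul (analyticAt_adjugate_apply hΨ i j)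
  have hinv : ∀ z i j, (Ψ z)⁻¹ i j = (z - z₀)⁻¹ * m i j z := fun z i j => by
    simp only [inv_def, Ring.inverse_eq_inv', smul_apply, smul_eq_mul, m, ← mul_assoc, ← mul_inv]
    rw [← hd]
  refine ⟨of fun i j => deriv (m i j) z₀, tendsto_pi_nhds.2 fun i => tendsto_pi_nhds.2 fun j => ?_⟩
  refine (hasDerivAt_iff_tendsto_slope.1 (hm i j).differentiableAt.hasDerivAt).congr' ?_
  filter_upwards [self_mem_nhdsWithin] with z hz
  simp only [slope_def_field, sub_apply, smul_apply, smul_eq_mul, hinv, m, hq0]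
  field_simp [sub_ne_zero.2 hz]

end Analytic

section Bound

open scoped Matrix.Norms.Elementwise

theorem exists_forall_norm_entry_le_of_tendsto {α m n E : Type*} [Fintype m] [Fintype n]
    [SeminormedAddCommGroup E] {l : Filter α} {F : α → Matrix m n E} {L : Matrix m n E}
    (hF : Tendsto F l (𝓝 L)) : ∃ C, ∀ᶠ x in l, ∀ i j, ‖F x i j‖ ≤ C :=
  ⟨‖L‖ + 1, (hF.norm.eventually (gt_mem_nhds (lt_add_one _))).mono fun _ hx _ _ =>
    (norm_entry_le_entrywise_sup_norm _).trans hx.le⟩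

end Bound

end Matrix

theorem inverse_residue_rank_one_general
    (r : ℕ) (z₀ : ℂ)
    (Ψ : ℂ → Matrix (Fin r) (Fin r) ℂ)
    (hΨ : ∀ i j, AnalyticAt ℂ (fun z => Ψ z i j) z₀)
    (hdet0 : (Ψ z₀).det = 0)
    (hdet' : deriv (fun z => (Ψ z).det) z₀ ≠ 0) :
    ∃ S : Matrix (Fin r) (Fin r) ℂ, S.rank = 1 ∧
      ∃ δ > 0, ∃ C : ℝ, ∀ z, z ≠ z₀ → ‖z - z₀‖ < δ →
        ∀ i j, ‖((Ψ z)⁻¹ - (z - z₀)⁻¹ • S) i j‖ ≤ C := by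
  refine ⟨(deriv (fun z => (Ψ z).det) z₀)⁻¹ • (Ψ z₀).adjugate, ?_, ?_⟩
  · rw [Matrix.rank_smul_of_mem_nonZeroDivisors _
      (mem_nonZeroDivisors_of_ne_zero (inv_ne_zero hdet'))]
    exact Matrix.rank_adjugate_eq_one hdet0
      (Matrix.adjugate_ne_zero_of_deriv_det_ne_zero hΨ hdet0 hdet')
  · obtain ⟨L, hL⟩ := Matrix.tendsto_inv_sub_smul_adjugate hΨ hdet0 hdet'
    obtain ⟨C, hC⟩ := Matrix.exists_forall_norm_entry_le_of_tendsto hL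
    obtain ⟨δ, hδ, hball⟩ := Metric.eventually_nhds_iff.1 (eventually_nhdsWithin_iff.1 hC)
    exact ⟨δ, hδ, C, fun z hz hzδ => hball (by rwa [dist_eq_norm]) hz⟩

/-- Let `Ψ(z)` be an `r×r` matrix of holomorphic functions near `z₀`, invertible on a
punctured neighborhood of `z₀`, such that `det Ψ` has a simple zero at `z₀`
(`det Ψ(z₀) = 0` and `(det Ψ)'(z₀) ≠ 0`).  Then `Ψ⁻¹(z) = S/(z−z₀) + O(1)` near `z₀`
where the residue matrix `S` has rank exactly `1`. -/
theorem inverse_residue_rank_one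
    (r : ℕ) (z₀ : ℂ)
    (Ψ : ℂ → Matrix (Fin r) (Fin r) ℂ)
    (hΨ : ∀ i j, AnalyticAt ℂ (fun z => Ψ z i j) z₀)
    (hinv : ∀ᶠ z in nhdsWithin z₀ {z₀}ᶜ, IsUnit (Ψ z))
    (hdet0 : (Ψ z₀).det = 0)
    (hdet' : deriv (fun z => (Ψ z).det) z₀ ≠ 0) :
    ∃ S : Matrix (Fin r) (Fin r) ℂ, S.rank = 1 ∧
      ∃ δ > 0, ∃ C : ℝ, ∀ z, z ≠ z₀ → ‖z - z₀‖ < δ →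
        ∀ i j, ‖((Ψ z)⁻¹ - (z - z₀)⁻¹ • S) i j‖ ≤ C :=
  inverse_residue_rank_one_general r z₀ Ψ hΨ hdet0 hdet'
end

section
/- Let ω = e^{2πi/m} and let p ∈ ℂ((λ^{−1})) with r and m̃ = m/r as defined by the period of k ↦ p(ω^kλ). Set f(z,w) = ∏_{j=0}^{m̃−1}(w − p̃(ω^{jr}λ^r)) ∈ ℂ((λ^{−1}))[w], where p(λ) = p̃(λ^r). Then the coefficients of f, as elements of ℂ((λ^{−1})), are invariant under λ ↦ ωλ; hence they lie in the subring of series in λ^{−m}, i.e. f(z,w) ∈ ℂ((z^{−1}))[w] with z = λ^m. -/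
/-- Substitution `λ ↦ a·λ` on `ℂ((λ⁻¹))`, modeled as Laurent series in `t = λ⁻¹`:
the coefficient of `t^n` (i.e. of `λ^(-n)`) is multiplied by `a^(-n)`. -/
noncomputable def substL (a : ℂˣ) (p : LaurentSeries ℂ) : LaurentSeries ℂ :=
  { coeff := fun n => ((a ^ (-n) : ℂˣ) : ℂ) * p.coeff n,
    isPWO_support' := p.isPWO_support.mono (by
      intro n hn
      simp only [Function.mem_support, ne_eq] at hn
      exact fun h => hn (by rw [h, mul_zero])) }

open Polynomial

/-! The factors of `f` form an orbit of `λ ↦ ωλ` which closes up after `m̃` steps, so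
substituting `ωλ` in the coefficients only permutes the factors. An invariant series
`q` satisfies `ω⁻ⁿ q_n = q_n` for all `n`, and as `ω` is a primitive `m`-th root of
unity this forces `q_n = 0` unless `m ∣ n`. -/

theorem Polynomial.map_prod_X_sub_C_of_cycle {R : Type*} [CommRing R] (σ : R →+* R)
    (g : ℕ → R) (n : ℕ) (hσ : ∀ j, σ (g j) = g (j + 1)) (hcycle : g n = g 0) :
    (∏ j ∈ Finset.range n, (X - C (g j))).map σ = ∏ j ∈ Finset.range n, (X - C (g j)) := by
  rcases n with _ | n
  · simp
  simp only [Polynomial.map_prod, Polynomial.map_sub, map_X, map_C, hσ]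
  rw [Finset.prod_range_succ, Finset.prod_range_succ', hcycle]

namespace substL

theorem coeff (a : ℂˣ) (p : LaurentSeries ℂ) (n : ℤ) :
    (substL a p).coeff n = ((a ^ (-n) : ℂˣ) : ℂ) * p.coeff n := rfl

theorem support (a : ℂˣ) (p : LaurentSeries ℂ) : (substL a p).support = p.support := by
  ext n
  simp [coeff, zpow_ne_zero]

theorem one_left (p : LaurentSeries ℂ) : substL 1 p = p := by
  ext n
  simp [coeff]

theorem comp (a b : ℂˣ) (p : LaurentSeries ℂ) : substL a (substL b p) = substL (a * b) p := by
  ext n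
  simp only [coeff, mul_zpow, Units.val_mul]
  ring

theorem map_mul (a : ℂˣ) (p q : LaurentSeries ℂ) :
    substL a (p * q) = substL a p * substL a q := by
  ext n
  have hsupp : Finset.antidiagonal (substL a p).isPWO_support (substL a q).isPWO_support n =
      Finset.antidiagonal p.isPWO_support q.isPWO_support n := by
    ext ij
    simp [support]
  rw [coeff, HahnSeries.coeff_mul, HahnSeries.coeff_mul, hsupp, Finset.mul_sum]
  refine Finset.sum_congr rfl fun ij hij => ?_
  have hpow : (a ^ (-n) : ℂˣ) = a ^ (-ij.1) * a ^ (-ij.2) := by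
    rw [← zpow_add, ← neg_add, (Finset.mem_antidiagonal.mp hij).2.2]
  rw [coeff, coeff, hpow, Units.val_mul]
  ring

noncomputable def ringHom (a : ℂˣ) : LaurentSeries ℂ →+* LaurentSeries ℂ where
  toFun := substL a
  map_one' := by
    ext n
    rcases eq_or_ne n 0 with rfl | hn
    · simp [coeff]
    · simp [coeff, HahnSeries.coeff_one, hn]
  map_mul' := map_mul a
  map_zero' := by ext n; simp [coeff]
  map_add' p q := by ext n; simp [coeff, mul_add]

theorem coeff_eq_zero_of_fixed {ω : ℂˣ} {m : ℕ} (hω : IsPrimitiveRoot (ω : ℂ) m)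
    {q : LaurentSeries ℂ} (hq : substL ω q = q) {n : ℤ} (hn : ¬ (m : ℤ) ∣ n) :
    q.coeff n = 0 := by
  by_contra hqn
  have hfix : ((ω ^ (-n) : ℂˣ) : ℂ) * q.coeff n = 1 * q.coeff n := by
    rw [← coeff, hq, one_mul]
  have hpow : (ω : ℂ) ^ (-n) = 1 := by
    rw [← Units.val_zpow_eq_zpow_val]
    exact mul_right_cancel₀ hqn hfix
  exact hn (dvd_neg.mp ((hω.zpow_eq_one_iff_dvd _).mp hpow))

end substL

/-- Let `ω = exp(2πi/m)`, `m = r·m̃`, and let `p ∈ ℂ((λ⁻¹))` be invariant under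
`λ ↦ ω^m̃ λ`.  Set `f(z,w) = ∏_{j=0}^{m̃-1} (w − p(ω^j λ)) ∈ ℂ((λ⁻¹))[w]`
(its `j`-th factor equals `w − p̃(ω^{jr} λ^r)` when `p(λ) = p̃(λ^r)`).  Then each
coefficient of `f` is invariant under `λ ↦ ω λ`, and hence is a series in `λ^{-m}`:
its coefficient in any degree not divisible by `m` vanishes, i.e.
`f(z,w) ∈ ℂ((z⁻¹))[w]` with `z = λ^m`. -/
theorem char_poly_coeffs_in_z
    (r mt : ℕ) (hr : 0 < r) (hmt : 0 < mt)
    (m : ℕ) (hm : m = r * mt)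
    (ω : ℂˣ) (hω : (ω : ℂ) = Complex.exp (2 * Real.pi * Complex.I / m))
    (p : LaurentSeries ℂ)
    (hp : substL (ω ^ mt) p = p)
    (f : Polynomial (LaurentSeries ℂ))
    (hf : f = ∏ j ∈ Finset.range mt, (X - C (substL (ω ^ j) p))) :
    ∀ i : ℕ, substL ω (f.coeff i) = f.coeff i ∧
      ∀ n : ℤ, ¬ ((m : ℤ) ∣ n) → (f.coeff i).coeff n = 0 := by
  have hprim : IsPrimitiveRoot (ω : ℂ) m := by
    rw [hω]
    exact Complex.isPrimitiveRoot_exp m (by rw [hm]; positivity)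
  have hf_fixed : f.map (substL.ringHom ω) = f := by
    rw [hf]
    refine Polynomial.map_prod_X_sub_C_of_cycle _ _ mt (fun j => ?_) ?_
    · exact (substL.comp ω (ω ^ j) p).trans (by rw [← pow_succ'])
    · rw [hp, pow_zero, substL.one_left]
  intro i
  have hcoeff : substL ω (f.coeff i) = f.coeff i := by
    conv_rhs => rw [← hf_fixed, coeff_map]
    rfl
  exact ⟨hcoeff, fun n hn => substL.coeff_eq_zero_of_fixed hprim hcoeff hn⟩
end
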